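/- arXiv:2208.03406 — 4 statements merged into one kernel-verified Lean document; each statement's English description precedes it below -/
import Mathlib

section
/- If (x*, y*) is a Nash equilibrium of the bimatrix game (A, B), then setting p* = x*ᵀ A y* and q* = x*ᵀ B y*, the point (x*, y*, p*, q*) satisfies (A y*)_i ≤ p* for every i ∈ {1,…,m} and (Bᵀ x*)_j ≤ q* for every j ∈ {1,…,n}, and its objective value x*ᵀ A y* + x*ᵀ B y* − p* − q* equals 0; in particular, it maximizes xᵀ A y + xᵀ B y − p − q over all mixed strategies x, y and reals p, q satisfying (A y)_i ≤ p for all i and (Bᵀ x)_j ≤ q for all j. -/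
/-!
Testing the equilibrium strategies against pure deviations gives feasibility, and the objective
at `(x*, y*, p*, q*)` is `0` by construction. At any feasible point, `xᵀ A y` and `xᵀ B y` are
convex combinations of the entries of `A y` and `Bᵀ x`, hence at most `p` and `q`, so the
objective is never positive.
-/

open Matrix Finset

variable {ι R : Type*} [Fintype ι] [CommSemiring R]

theorem dotProduct_mulVec_eq_transpose {κ : Type*} [Fintype κ] (M : Matrix ι κ R)
    (x : ι → R) (y : κ → R) : x ⬝ᵥ (M *ᵥ y) = y ⬝ᵥ (Mᵀ *ᵥ x) := by
  rw [dotProduct_mulVec, ← mulVec_transpose, dotProduct_comm]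

variable [PartialOrder R] [IsOrderedRing R]

theorem dotProduct_le_of_forall_le {x v : ι → R} {c : R} (hx : ∀ i, 0 ≤ x i)
    (hx₁ : ∑ i, x i = 1) (hv : ∀ i, v i ≤ c) : x ⬝ᵥ v ≤ c :=
  calc x ⬝ᵥ v = ∑ i, x i * v i := rfl
    _ ≤ ∑ i, x i * c := sum_le_sum fun i _ => mul_le_mul_of_nonneg_left (hv i) (hx i)
    _ = c := by rw [← sum_mul, hx₁, one_mul]

theorem le_of_forall_dotProduct_le [DecidableEq ι] {v : ι → R} {c : R}
    (h : ∀ x : ι → R, (∀ i, 0 ≤ x i) → ∑ i, x i = 1 → x ⬝ᵥ v ≤ c) (i : ι) : v i ≤ c := by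
  have hsingle : 0 ≤ (Pi.single i 1 : ι → R) := Pi.single_nonneg.2 zero_le_one
  simpa [single_dotProduct] using h (Pi.single i 1) hsingle (by simp)

theorem nash_gives_optimal_bilinear_general
    (m n : ℕ)
    (A B : Matrix (Fin m) (Fin n) ℝ)
    (xs : Fin m → ℝ) (ys : Fin n → ℝ)
    (hNash1 : ∀ x : Fin m → ℝ, (∀ i, 0 ≤ x i) → ∑ i, x i = 1 →
      x ⬝ᵥ (A *ᵥ ys) ≤ xs ⬝ᵥ (A *ᵥ ys))
    (hNash2 : ∀ y : Fin n → ℝ, (∀ j, 0 ≤ y j) → ∑ j, y j = 1 →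
      xs ⬝ᵥ (B *ᵥ y) ≤ xs ⬝ᵥ (B *ᵥ ys)) :
    (∀ i, (A *ᵥ ys) i ≤ xs ⬝ᵥ (A *ᵥ ys)) ∧
    (∀ j, (Bᵀ *ᵥ xs) j ≤ xs ⬝ᵥ (B *ᵥ ys)) ∧
    (xs ⬝ᵥ (A *ᵥ ys) + xs ⬝ᵥ (B *ᵥ ys) - (xs ⬝ᵥ (A *ᵥ ys)) - (xs ⬝ᵥ (B *ᵥ ys)) = 0) ∧
    (∀ (x : Fin m → ℝ) (y : Fin n → ℝ) (p q : ℝ),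
      (∀ i, 0 ≤ x i) → ∑ i, x i = 1 →
      (∀ j, 0 ≤ y j) → ∑ j, y j = 1 →
      (∀ i, (A *ᵥ y) i ≤ p) → (∀ j, (Bᵀ *ᵥ x) j ≤ q) →
      x ⬝ᵥ (A *ᵥ y) + x ⬝ᵥ (B *ᵥ y) - p - q ≤
        xs ⬝ᵥ (A *ᵥ ys) + xs ⬝ᵥ (B *ᵥ ys) - (xs ⬝ᵥ (A *ᵥ ys)) - (xs ⬝ᵥ (B *ᵥ ys))) := by
  refine ⟨le_of_forall_dotProduct_le hNash1, le_of_forall_dotProduct_le fun y hy hy₁ => ?_,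
    by ring, fun x y p q hx hx₁ hy hy₁ hp hq => ?_⟩
  · rw [← dotProduct_mulVec_eq_transpose]
    exact hNash2 y hy hy₁
  · have hA : x ⬝ᵥ (A *ᵥ y) ≤ p := dotProduct_le_of_forall_le hx hx₁ hp
    have hB : x ⬝ᵥ (B *ᵥ y) ≤ q := by
      rw [dotProduct_mulVec_eq_transpose]
      exact dotProduct_le_of_forall_le hy hy₁ hq
    linarith

/-- If `(x*, y*)` is a Nash equilibrium of the bimatrix game `(A, B)`,
then with `p* = x*ᵀ A y*` and `q* = x*ᵀ B y*`, the point `(x*, y*, p*, q*)` is feasible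
for the bilinear program, its objective value is `0`, and it maximizes the objective
over all feasible points. -/
theorem nash_gives_optimal_bilinear
    (m n : ℕ) (hm : 1 ≤ m) (hn : 1 ≤ n)
    (A B : Matrix (Fin m) (Fin n) ℝ)
    (xs : Fin m → ℝ) (ys : Fin n → ℝ)
    (hxs : ∀ i, 0 ≤ xs i) (hxssum : ∑ i, xs i = 1)
    (hys : ∀ j, 0 ≤ ys j) (hyssum : ∑ j, ys j = 1)
    (hNash1 : ∀ x : Fin m → ℝ, (∀ i, 0 ≤ x i) → ∑ i, x i = 1 →
      x ⬝ᵥ (A *ᵥ ys) ≤ xs ⬝ᵥ (A *ᵥ ys))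
    (hNash2 : ∀ y : Fin n → ℝ, (∀ j, 0 ≤ y j) → ∑ j, y j = 1 →
      xs ⬝ᵥ (B *ᵥ y) ≤ xs ⬝ᵥ (B *ᵥ ys)) :
    (∀ i, (A *ᵥ ys) i ≤ xs ⬝ᵥ (A *ᵥ ys)) ∧
    (∀ j, (Bᵀ *ᵥ xs) j ≤ xs ⬝ᵥ (B *ᵥ ys)) ∧
    (xs ⬝ᵥ (A *ᵥ ys) + xs ⬝ᵥ (B *ᵥ ys) - (xs ⬝ᵥ (A *ᵥ ys)) - (xs ⬝ᵥ (B *ᵥ ys)) = 0) ∧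
    (∀ (x : Fin m → ℝ) (y : Fin n → ℝ) (p q : ℝ),
      (∀ i, 0 ≤ x i) → ∑ i, x i = 1 →
      (∀ j, 0 ≤ y j) → ∑ j, y j = 1 →
      (∀ i, (A *ᵥ y) i ≤ p) → (∀ j, (Bᵀ *ᵥ x) j ≤ q) →
      x ⬝ᵥ (A *ᵥ y) + x ⬝ᵥ (B *ᵥ y) - p - q ≤
        xs ⬝ᵥ (A *ᵥ ys) + xs ⬝ᵥ (B *ᵥ ys) - (xs ⬝ᵥ (A *ᵥ ys)) - (xs ⬝ᵥ (B *ᵥ ys))) :=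
  nash_gives_optimal_bilinear_general m n A B xs ys hNash1 hNash2
end

section
/- If the mixed strategy profile x̄ = (x̄^1,…,x̄^n) is a Nash equilibrium, then setting p̄^i = U_i(x̄) for each player i, the point (x̄, p̄) is an optimal solution of the multilinear program MLP1: it satisfies u_i(s, x̄) ≤ p̄^i for every player i and s ∈ S_i, and for every mixed strategy profile x and every p ∈ ℝ^n with u_i(s, x) ≤ p^i for all i and s ∈ S_i, one has ∑_{i=1}^n U_i(x) − ∑_{i=1}^n p^i ≤ ∑_{i=1}^n U_i(x̄) − ∑_{i=1}^n p̄^i. -/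
open Finset

/-- Expected payoff `U_i(x)` of player `i` under the mixed strategy profile `x`. -/
def expPayoff {n : ℕ} {S : Fin n → Type} [∀ i, Fintype (S i)]
    (A : Fin n → (∀ j, S j) → ℝ) (x : ∀ i, S i → ℝ) (i : Fin n) : ℝ :=
  ∑ t : ∀ j, S j, A i t * ∏ j, x j (t j)

/-- Expected payoff `u_i(s, x)` of player `i` playing the pure strategy `s` while the
other players play their mixed strategies from `x`: summing over full pure profiles `t`
with `t i = s` is the same as summing over tuples `ŝ` of pure strategies of the others. -/
def purePayoff {n : ℕ} {S : Fin n → Type} [∀ i, Fintype (S i)] [∀ i, DecidableEq (S i)]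
    (A : Fin n → (∀ j, S j) → ℝ) (x : ∀ i, S i → ℝ) (i : Fin n) (s : S i) : ℝ :=
  ∑ t : ∀ j, S j, if t i = s then A i t * ∏ j ∈ Finset.univ.erase i, x j (t j) else 0

/-- `U^i`: the maximum difference of any two payoffs of player `i`. -/
noncomputable def payoffRange {n : ℕ} {S : Fin n → Type} [∀ i, Fintype (S i)]
    [∀ i, Nonempty (S i)] (A : Fin n → (∀ j, S j) → ℝ) (i : Fin n) : ℝ :=
  Finset.univ.sup' Finset.univ_nonempty (A i) - Finset.univ.inf' Finset.univ_nonempty (A i)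

/-! Since `U_i(x) = ∑ₛ xⁱ(s) u_i(s, x)` is an average of pure-strategy payoffs, every feasible point
of MLP1 has objective value at most `0`. The Nash equilibrium attains `0`, and it is feasible
because deviating to a pure strategy `s` yields exactly `u_i(s, x̄)`. -/

section Payoffs

variable {n : ℕ} {S : Fin n → Type} [∀ i, Fintype (S i)] [∀ i, DecidableEq (S i)]
  (A : Fin n → (∀ j, S j) → ℝ)

theorem expPayoff_eq_sum_mul_purePayoff (x : ∀ i, S i → ℝ) (i : Fin n) :
    expPayoff A x i = ∑ s, x i s * purePayoff A x i s := by
  unfold expPayoff purePayoff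
  simp only [mul_sum]
  rw [sum_comm]
  refine sum_congr rfl fun t _ => ?_
  rw [sum_eq_single (t i) (fun s _ hs => by simp [Ne.symm hs]) (by simp), if_pos rfl,
    ← mul_prod_erase univ (fun j => x j (t j)) (mem_univ i)]
  ring

theorem purePayoff_update_self (x : ∀ i, S i → ℝ) (i : Fin n) (y : S i → ℝ) (s : S i) :
    purePayoff A (Function.update x i y) i s = purePayoff A x i s := by
  unfold purePayoff
  refine sum_congr rfl fun t _ => ?_
  congr 2
  exact prod_congr rfl fun j hj => by rw [Function.update_of_ne (ne_of_mem_erase hj)]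

theorem expPayoff_update_single (x : ∀ i, S i → ℝ) (i : Fin n) (s : S i) :
    expPayoff A (Function.update x i (Pi.single s 1)) i = purePayoff A x i s := by
  simp [expPayoff_eq_sum_mul_purePayoff, purePayoff_update_self, Pi.single_apply]

theorem expPayoff_le_of_purePayoff_le (x : ∀ i, S i → ℝ) (i : Fin n) (c : ℝ)
    (hx0 : ∀ s, 0 ≤ x i s) (hx1 : ∑ s, x i s = 1) (hc : ∀ s, purePayoff A x i s ≤ c) :
    expPayoff A x i ≤ c :=
  calc expPayoff A x i = ∑ s, x i s * purePayoff A x i s :=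
        expPayoff_eq_sum_mul_purePayoff A x i
    _ ≤ ∑ s, x i s * c := sum_le_sum fun s _ => mul_le_mul_of_nonneg_left (hc s) (hx0 s)
    _ = c := by rw [← sum_mul, hx1, one_mul]

end Payoffs

theorem nash_gives_optimal_mlp1_general
    (n : ℕ) (S : Fin n → Type)
    [∀ i, Fintype (S i)] [∀ i, DecidableEq (S i)]
    (A : Fin n → (∀ j, S j) → ℝ)
    (x : ∀ i, S i → ℝ)
    (hNash : ∀ (i : Fin n) (y : S i → ℝ), (∀ s, 0 ≤ y s) → ∑ s, y s = 1 →
      expPayoff A (Function.update x i y) i ≤ expPayoff A x i)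
    :
    (∀ (i : Fin n) (s : S i), purePayoff A x i s ≤ expPayoff A x i) ∧
    (∀ (y : ∀ i, S i → ℝ) (p : Fin n → ℝ),
      (∀ i s, 0 ≤ y i s) → (∀ i, ∑ s, y i s = 1) →
      (∀ (i : Fin n) (s : S i), purePayoff A y i s ≤ p i) →
      ∑ i, expPayoff A y i - ∑ i, p i ≤
        ∑ i, expPayoff A x i - ∑ i, expPayoff A x i) := by
  refine ⟨fun i s => ?_, fun y p hy0 hy1 hp => ?_⟩
  · rw [← expPayoff_update_single]
    exact hNash i _ (fun t => by rw [Pi.single_apply]; positivity) (by simp)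
  · have hle : ∑ i, expPayoff A y i ≤ ∑ i, p i :=
      sum_le_sum fun i _ => expPayoff_le_of_purePayoff_le A y i (p i) (hy0 i) (hy1 i) (hp i)
    linarith

/-- If the mixed strategy profile `x̄` is a Nash equilibrium, then with
`p̄^i = U_i(x̄)` the point `(x̄, p̄)` is an optimal solution of MLP1: it is feasible, and its
objective value dominates the objective value of every feasible point. -/
theorem nash_gives_optimal_mlp1
    (n : ℕ) (hn : 2 ≤ n) (S : Fin n → Type)
    [∀ i, Fintype (S i)] [∀ i, Nonempty (S i)] [∀ i, DecidableEq (S i)]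
    (A : Fin n → (∀ j, S j) → ℝ)
    (x : ∀ i, S i → ℝ)
    (hx0 : ∀ i s, 0 ≤ x i s) (hx1 : ∀ i, ∑ s, x i s = 1)
    (hNash : ∀ (i : Fin n) (y : S i → ℝ), (∀ s, 0 ≤ y s) → ∑ s, y s = 1 →
      expPayoff A (Function.update x i y) i ≤ expPayoff A x i)
    :
    (∀ (i : Fin n) (s : S i), purePayoff A x i s ≤ expPayoff A x i) ∧
    (∀ (y : ∀ i, S i → ℝ) (p : Fin n → ℝ),
      (∀ i s, 0 ≤ y i s) → (∀ i, ∑ s, y i s = 1) →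
      (∀ (i : Fin n) (s : S i), purePayoff A y i s ≤ p i) →
      ∑ i, expPayoff A y i - ∑ i, p i ≤
        ∑ i, expPayoff A x i - ∑ i, expPayoff A x i) :=
  nash_gives_optimal_mlp1_general n S A x hNash
end

section
/- Every feasible solution of the multilinear feasibility program MLP2 is a Nash equilibrium: if the mixed strategy profile x = (x^1,…,x^n) and p ∈ ℝ^n satisfy u_i(s, x) ≤ p^i for every player i and s ∈ S_i, and ∑_{i=1}^n U_i(x) − ∑_{i=1}^n p^i ≥ 0, then x is a Nash equilibrium. -/
open Finset

/-!
Each `U_i` is linear in player `i`'s own mixed strategy, with the pure payoffs `u_i(s, x)` as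
coefficients. Hence the constraints `u_i(s, x) ≤ p^i` bound every payoff `U_i(y^i, x^{-i})`, in
particular `U_i(x)`, by `p^i`; the objective constraint `∑ U_i(x) ≥ ∑ p^i` then forces
`U_i(x) = p^i` for every player, so no deviation `y^i` can beat `U_i(x)`.
-/

lemma sum_mul_le_of_le {ι : Type*} {s : Finset ι} {w f : ι → ℝ} {c : ℝ}
    (hw : ∀ a ∈ s, 0 ≤ w a) (hw1 : ∑ a ∈ s, w a = 1) (hf : ∀ a ∈ s, f a ≤ c) :
    ∑ a ∈ s, w a * f a ≤ c :=
  calc ∑ a ∈ s, w a * f a ≤ ∑ a ∈ s, w a * c :=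
        sum_le_sum fun a ha => mul_le_mul_of_nonneg_left (hf a ha) (hw a ha)
    _ = c := by rw [← sum_mul, hw1, one_mul]

lemma prod_update_eq_mul_prod_erase {ι M : Type*} [Fintype ι] [DecidableEq ι] [CommMonoid M]
    {β : ι → Type*} (x : ∀ j, β j → M) (i : ι) (y : β i → M) (t : ∀ j, β j) :
    ∏ j, Function.update x i y j (t j) = y (t i) * ∏ j ∈ univ.erase i, x j (t j) := by
  rw [← mul_prod_erase univ _ (mem_univ i), Function.update_self]
  congr 1
  exact prod_congr rfl fun j hj => by rw [Function.update_of_ne (ne_of_mem_erase hj)]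

section Payoff

variable {n : ℕ} {S : Fin n → Type} [∀ i, Fintype (S i)] [∀ i, DecidableEq (S i)]
  (A : Fin n → (∀ j, S j) → ℝ) (x : ∀ i, S i → ℝ) (i : Fin n)

lemma expPayoff_update_eq_sum_mul_purePayoff (y : S i → ℝ) :
    expPayoff A (Function.update x i y) i = ∑ s, y s * purePayoff A x i s := by
  simp only [expPayoff, purePayoff, prod_update_eq_mul_prod_erase, mul_sum, mul_ite, mul_zero]
  rw [sum_comm]
  simp only [sum_ite_eq, mem_univ, if_true]
  exact sum_congr rfl fun t _ => by ring

variable {A x i}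

lemma expPayoff_update_le {c : ℝ} (hc : ∀ s, purePayoff A x i s ≤ c) {y : S i → ℝ}
    (hy0 : ∀ s, 0 ≤ y s) (hy1 : ∑ s, y s = 1) :
    expPayoff A (Function.update x i y) i ≤ c := by
  rw [expPayoff_update_eq_sum_mul_purePayoff]
  exact sum_mul_le_of_le (fun s _ => hy0 s) hy1 fun s _ => hc s

lemma expPayoff_le {c : ℝ} (hc : ∀ s, purePayoff A x i s ≤ c)
    (hx0 : ∀ s, 0 ≤ x i s) (hx1 : ∑ s, x i s = 1) :
    expPayoff A x i ≤ c := by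
  simpa only [Function.update_eq_self] using expPayoff_update_le hc hx0 hx1

end Payoff

theorem mlp2_feasible_gives_nash_general
    (n : ℕ) (S : Fin n → Type)
    [∀ i, Fintype (S i)] [∀ i, DecidableEq (S i)]
    (A : Fin n → (∀ j, S j) → ℝ)
    (x : ∀ i, S i → ℝ) (p : Fin n → ℝ)
    (hx0 : ∀ i s, 0 ≤ x i s) (hx1 : ∀ i, ∑ s, x i s = 1)
    (hp : ∀ (i : Fin n) (s : S i), purePayoff A x i s ≤ p i)
    (hobj : 0 ≤ ∑ i, expPayoff A x i - ∑ i, p i) :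
    ∀ (i : Fin n) (y : S i → ℝ), (∀ s, 0 ≤ y s) → ∑ s, y s = 1 →
      expPayoff A (Function.update x i y) i ≤ expPayoff A x i := by
  intro i y hy0 hy1
  have hle : ∀ j, expPayoff A x j ≤ p j := fun j => expPayoff_le (hp j) (hx0 j) (hx1 j)
  have heq : expPayoff A x i = p i :=
    (sum_eq_sum_iff_of_le fun j _ => hle j).mp
      (le_antisymm (sum_le_sum fun j _ => hle j) (sub_nonneg.mp hobj)) i (mem_univ i)
  exact heq ▸ expPayoff_update_le (hp i) hy0 hy1

/-- Every feasible solution of the multilinear feasibility program MLP2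
is a Nash equilibrium. -/
theorem mlp2_feasible_gives_nash
    (n : ℕ) (hn : 2 ≤ n) (S : Fin n → Type)
    [∀ i, Fintype (S i)] [∀ i, Nonempty (S i)] [∀ i, DecidableEq (S i)]
    (A : Fin n → (∀ j, S j) → ℝ)
    (x : ∀ i, S i → ℝ) (p : Fin n → ℝ)
    (hx0 : ∀ i s, 0 ≤ x i s) (hx1 : ∀ i, ∑ s, x i s = 1)
    (hp : ∀ (i : Fin n) (s : S i), purePayoff A x i s ≤ p i)
    (hobj : 0 ≤ ∑ i, expPayoff A x i - ∑ i, p i) :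
    ∀ (i : Fin n) (y : S i → ℝ), (∀ s, 0 ≤ y s) → ∑ s, y s = 1 →
      expPayoff A (Function.update x i y) i ≤ expPayoff A x i :=
  mlp2_feasible_gives_nash_general n S A x p hx0 hx1 hp hobj
end

section
/- Assume U^i > 0 for every player i. If the mixed strategy profile x = (x^1,…,x^n) is a Nash equilibrium, then there exist reals ū^i, u^i_s, r^i_s, f^i_s, g^i_s and b^i_s ∈ {0,1} (for all players i and s ∈ S_i) satisfying the MIMLP4 constraints — u^i_s = u_i(s, x), ū^i ≥ u^i_s, r^i_s = ū^i − u^i_s, r^i_s ≥ 0, f^i_s ≥ r^i_s / U^i, f^i_s ≥ b^i_s, g^i_s ≥ x^i(s), g^i_s ≥ 1 − b^i_s — whose objective value ∑_{i=1}^n ∑_{s∈S_i} (f^i_s + g^i_s) equals ∑_{i=1}^n |S_i|. -/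
/-!
At a Nash equilibrium every pure strategy played with positive probability is a best reply, so
its regret `ū^i - u^i_s` vanishes. Hence `b^i_s = [x^i(s) = 0]`, `f = b`, `g = 1 - b` is feasible:
on the support `r^i_s / U^i = 0`, and off it `r^i_s ≤ U^i` because pure payoffs are averages of
payoffs of player `i`. Each strategy then contributes exactly `f^i_s + g^i_s = 1`.
-/

open Finset

section WeightedSum

variable {ι : Type*} [Fintype ι] [Nonempty ι] {w : ι → ℝ}

lemma sum_mul_le_sup' (hw0 : ∀ t, 0 ≤ w t) (hw1 : ∑ t, w t = 1) (f : ι → ℝ) :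
    ∑ t, f t * w t ≤ univ.sup' univ_nonempty f :=
  calc ∑ t, f t * w t ≤ ∑ t, univ.sup' univ_nonempty f * w t :=
        sum_le_sum fun t _ => mul_le_mul_of_nonneg_right (le_sup' f (mem_univ t)) (hw0 t)
    _ = univ.sup' univ_nonempty f := by rw [← mul_sum, hw1, mul_one]

lemma inf'_le_sum_mul (hw0 : ∀ t, 0 ≤ w t) (hw1 : ∑ t, w t = 1) (f : ι → ℝ) :
    univ.inf' univ_nonempty f ≤ ∑ t, f t * w t :=
  calc univ.inf' univ_nonempty f = ∑ t, univ.inf' univ_nonempty f * w t := by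
        rw [← mul_sum, hw1, mul_one]
    _ ≤ ∑ t, f t * w t :=
        sum_le_sum fun t _ => mul_le_mul_of_nonneg_right (inf'_le f (mem_univ t)) (hw0 t)

lemma eq_sup'_of_sup'_le_sum_mul (hw0 : ∀ t, 0 ≤ w t) (hw1 : ∑ t, w t = 1) {f : ι → ℝ}
    (h : univ.sup' univ_nonempty f ≤ ∑ t, f t * w t) {s : ι} (hs : w s ≠ 0) :
    f s = univ.sup' univ_nonempty f := by
  set M := univ.sup' univ_nonempty f
  have hgap : ∀ t, 0 ≤ (M - f t) * w t := fun t =>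
    mul_nonneg (sub_nonneg.2 (le_sup' f (mem_univ t))) (hw0 t)
  have hsum : ∑ t, (M - f t) * w t = 0 := by
    refine le_antisymm ?_ (sum_nonneg fun t _ => hgap t)
    simp only [sub_mul, sum_sub_distrib, ← mul_sum, hw1, mul_one]
    linarith
  have hs' := (sum_eq_zero_iff_of_nonneg fun t _ => hgap t).1 hsum s (mem_univ s)
  linarith [(mul_eq_zero.1 hs').resolve_right hs]

end WeightedSum

section Game

variable {n : ℕ} {S : Fin n → Type} [∀ i, Fintype (S i)] (A : Fin n → (∀ j, S j) → ℝ)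

lemma sum_prod_eq_one {z : ∀ i, S i → ℝ} (hz1 : ∀ j, ∑ s, z j s = 1) :
    ∑ t : ∀ j, S j, ∏ j, z j (t j) = 1 := by
  rw [← Fintype.prod_sum]
  simp [hz1]

variable [∀ i, Nonempty (S i)] {z : ∀ i, S i → ℝ}

lemma expPayoff_le_sup' (hz0 : ∀ j s, 0 ≤ z j s) (hz1 : ∀ j, ∑ s, z j s = 1) (i : Fin n) :
    expPayoff A z i ≤ univ.sup' univ_nonempty (A i) :=
  sum_mul_le_sup' (fun _ => prod_nonneg fun j _ => hz0 j _) (sum_prod_eq_one hz1) (A i)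

lemma inf'_le_expPayoff (hz0 : ∀ j s, 0 ≤ z j s) (hz1 : ∀ j, ∑ s, z j s = 1) (i : Fin n) :
    univ.inf' univ_nonempty (A i) ≤ expPayoff A z i :=
  inf'_le_sum_mul (fun _ => prod_nonneg fun j _ => hz0 j _) (sum_prod_eq_one hz1) (A i)

end Game

section PurePayoff

variable {n : ℕ} {S : Fin n → Type} [∀ i, Fintype (S i)] [∀ i, DecidableEq (S i)]
  (A : Fin n → (∀ j, S j) → ℝ) {x : ∀ i, S i → ℝ}

lemma expPayoff_update (x : ∀ i, S i → ℝ) (i : Fin n) (y : S i → ℝ) :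
    expPayoff A (Function.update x i y) i = ∑ s, purePayoff A x i s * y s := by
  have hprod : ∀ t : ∀ j, S j,
      ∏ j, Function.update x i y j (t j) = y (t i) * ∏ j ∈ univ.erase i, x j (t j) := by
    intro t
    rw [← mul_prod_erase univ _ (mem_univ i), Function.update_self]
    congr 1
    exact prod_congr rfl fun j hj => by rw [Function.update_of_ne (ne_of_mem_erase hj)]
  simp only [expPayoff, purePayoff, sum_mul, ite_mul, zero_mul]
  rw [sum_comm]
  refine sum_congr rfl fun t _ => ?_
  simp [hprod]
  ring

lemma expPayoff_eq_sum_purePayoff (i : Fin n) :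
    expPayoff A x i = ∑ s, purePayoff A x i s * x i s := by
  simpa using expPayoff_update A x i (x i)

lemma purePayoff_eq_expPayoff_update_single (i : Fin n) (s : S i) :
    purePayoff A x i s = expPayoff A (Function.update x i (Pi.single s 1)) i := by
  simp [expPayoff_update, Pi.single_apply]

variable [∀ i, Nonempty (S i)]

/-- The paper's `ū^i`. -/
noncomputable def bestReplyPayoff (x : ∀ i, S i → ℝ) (i : Fin n) : ℝ :=
  univ.sup' univ_nonempty (purePayoff A x i)

lemma purePayoff_le_bestReplyPayoff (i : Fin n) (s : S i) :
    purePayoff A x i s ≤ bestReplyPayoff A x i :=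
  le_sup' _ (mem_univ s)

lemma purePayoff_mem_Icc (hx0 : ∀ i s, 0 ≤ x i s) (hx1 : ∀ i, ∑ s, x i s = 1) (i : Fin n)
    (s : S i) :
    purePayoff A x i s ∈
      Set.Icc (univ.inf' univ_nonempty (A i)) (univ.sup' univ_nonempty (A i)) := by
  have hz0 : ∀ j t, 0 ≤ Function.update x i (Pi.single s 1) j t :=
    Function.forall_update_iff _ (p := fun j (z : S j → ℝ) => ∀ t, 0 ≤ z t) |>.2
      ⟨fun t => by by_cases h : t = s <;> simp [h], fun j _ => hx0 j⟩
  have hz1 : ∀ j, ∑ t, Function.update x i (Pi.single s 1) j t = 1 :=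
    Function.forall_update_iff _ (p := fun j (z : S j → ℝ) => ∑ t, z t = 1) |>.2
      ⟨by simp, fun j _ => hx1 j⟩
  rw [purePayoff_eq_expPayoff_update_single]
  exact ⟨inf'_le_expPayoff A hz0 hz1 i, expPayoff_le_sup' A hz0 hz1 i⟩

lemma bestReplyPayoff_sub_purePayoff_le_payoffRange (hx0 : ∀ i s, 0 ≤ x i s)
    (hx1 : ∀ i, ∑ s, x i s = 1) (i : Fin n) (s : S i) :
    bestReplyPayoff A x i - purePayoff A x i s ≤ payoffRange A i := by
  have hbest : bestReplyPayoff A x i ≤ univ.sup' univ_nonempty (A i) :=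
    sup'_le _ _ fun s' _ => (purePayoff_mem_Icc A hx0 hx1 i s').2
  unfold payoffRange
  linarith [(purePayoff_mem_Icc A hx0 hx1 i s).1]

lemma bestReplyPayoff_le_expPayoff_of_nash (i : Fin n)
    (hNash : ∀ y : S i → ℝ, (∀ s, 0 ≤ y s) → ∑ s, y s = 1 →
      expPayoff A (Function.update x i y) i ≤ expPayoff A x i) :
    bestReplyPayoff A x i ≤ expPayoff A x i := by
  obtain ⟨s, -, hs⟩ := exists_mem_eq_sup' univ_nonempty (purePayoff A x i)
  have hdev := hNash (Pi.single s 1) (fun t => by by_cases h : t = s <;> simp [h]) (by simp)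
  rwa [← purePayoff_eq_expPayoff_update_single, ← hs] at hdev

lemma purePayoff_eq_bestReplyPayoff_of_nash (hx0 : ∀ i s, 0 ≤ x i s)
    (hx1 : ∀ i, ∑ s, x i s = 1) (i : Fin n)
    (hNash : ∀ y : S i → ℝ, (∀ s, 0 ≤ y s) → ∑ s, y s = 1 →
      expPayoff A (Function.update x i y) i ≤ expPayoff A x i)
    {s : S i} (hs : x i s ≠ 0) :
    purePayoff A x i s = bestReplyPayoff A x i := by
  refine eq_sup'_of_sup'_le_sum_mul (hx0 i) (hx1 i) ?_ hs
  rw [← expPayoff_eq_sum_purePayoff]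
  exact bestReplyPayoff_le_expPayoff_of_nash A i hNash

end PurePayoff

theorem nash_gives_mimlp4_optimal_general
    (n : ℕ) (S : Fin n → Type)
    [∀ i, Fintype (S i)] [∀ i, Nonempty (S i)] [∀ i, DecidableEq (S i)]
    (A : Fin n → (∀ j, S j) → ℝ)
    (x : ∀ i, S i → ℝ)
    (hx0 : ∀ i s, 0 ≤ x i s) (hx1 : ∀ i, ∑ s, x i s = 1)
    (hNash : ∀ (i : Fin n) (y : S i → ℝ), (∀ s, 0 ≤ y s) → ∑ s, y s = 1 →
      expPayoff A (Function.update x i y) i ≤ expPayoff A x i)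
    :
    ∃ (ubar : Fin n → ℝ) (u r f g b : ∀ i, S i → ℝ),
      (∀ (i : Fin n) (s : S i),
        (b i s = 0 ∨ b i s = 1) ∧
        u i s = purePayoff A x i s ∧
        u i s ≤ ubar i ∧
        r i s = ubar i - u i s ∧
        0 ≤ r i s ∧
        r i s / payoffRange A i ≤ f i s ∧
        b i s ≤ f i s ∧
        x i s ≤ g i s ∧
        1 - b i s ≤ g i s) ∧
      ∑ i, ∑ s, (f i s + g i s) = ∑ i, (Fintype.card (S i) : ℝ) := by
  let b : ∀ i, S i → ℝ := fun i s => if x i s = 0 then 1 else 0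
  refine ⟨bestReplyPayoff A x, purePayoff A x,
    fun i s => bestReplyPayoff A x i - purePayoff A x i s, b, fun i s => 1 - b i s, b,
    fun i s => ?_, by simp⟩
  have hr0 := sub_nonneg.2 (purePayoff_le_bestReplyPayoff A (x := x) i s)
  have hrU := bestReplyPayoff_sub_purePayoff_le_payoffRange A hx0 hx1 i s
  refine ⟨by by_cases h : x i s = 0 <;> simp [b, h], rfl,
    purePayoff_le_bestReplyPayoff A i s, rfl, hr0, ?_, le_rfl, ?_, le_rfl⟩
  · by_cases h : x i s = 0
    · simpa [b, h] using div_le_one_of_le₀ hrU (hr0.trans hrU)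
    · simp [b, h, purePayoff_eq_bestReplyPayoff_of_nash A hx0 hx1 i (hNash i) h]
  · by_cases h : x i s = 0
    · simp [b, h]
    · simpa [b, h, hx1 i] using single_le_sum (fun t _ => hx0 i t) (mem_univ s)

/-- Assume `U^i > 0` for every player. If the mixed strategy profile `x`
is a Nash equilibrium, then there exist `ū^i`, `u^i_s`, `r^i_s`, `f^i_s`, `g^i_s` and binary
`b^i_s` satisfying the MIMLP4 constraints whose objective value `∑ᵢ ∑_{s ∈ S_i} (f^i_s + g^i_s)`
equals `∑ᵢ |S_i|`. -/
theorem nash_gives_mimlp4_optimal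
    (n : ℕ) (hn : 2 ≤ n) (S : Fin n → Type)
    [∀ i, Fintype (S i)] [∀ i, Nonempty (S i)] [∀ i, DecidableEq (S i)]
    (A : Fin n → (∀ j, S j) → ℝ)
    (hU : ∀ i, 0 < payoffRange A i)
    (x : ∀ i, S i → ℝ)
    (hx0 : ∀ i s, 0 ≤ x i s) (hx1 : ∀ i, ∑ s, x i s = 1)
    (hNash : ∀ (i : Fin n) (y : S i → ℝ), (∀ s, 0 ≤ y s) → ∑ s, y s = 1 →
      expPayoff A (Function.update x i y) i ≤ expPayoff A x i)
    :
    ∃ (ubar : Fin n → ℝ) (u r f g b : ∀ i, S i → ℝ),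
      (∀ (i : Fin n) (s : S i),
        (b i s = 0 ∨ b i s = 1) ∧
        u i s = purePayoff A x i s ∧
        u i s ≤ ubar i ∧
        r i s = ubar i - u i s ∧
        0 ≤ r i s ∧
        r i s / payoffRange A i ≤ f i s ∧
        b i s ≤ f i s ∧
        x i s ≤ g i s ∧
        1 - b i s ≤ g i s) ∧
      ∑ i, ∑ s, (f i s + g i s) = ∑ i, (Fintype.card (S i) : ℝ) :=
  nash_gives_mimlp4_optimal_general n S A x hx0 hx1 hNash
end
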